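/- Let g : [0, π/3] → ℝ be continuous, strictly positive, continuously differentiable on (0, π/3), with one-sided derivatives g′₊(0) and g′₋(π/3) at the endpoints. Then the function G = q/g(θ) is differentiable at every point of ℝ² \ {(0,0)} if and only if g′₊(0) = 0 and g′₋(π/3) = 0; that is, the deviatoric yield function q/g(θ) is smooth away from the hydrostatic axis exactly when g′ vanishes at both θ = 0 and θ = π/3. -/

import Mathlib

/-- The deviatoric stress invariant q(S₁,S₂) = √(3(S₁² + S₁S₂ + S₂²)), with S₃ = −S₁−S₂. -/
noncomputable def qf (S : ℝ × ℝ) : ℝ :=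
  Real.sqrt (3 * (S.1 ^ 2 + S.1 * S.2 + S.2 ^ 2))

/-- The Lode angle θ(S₁,S₂) = (1/3)·arccos((27/2)·S₁S₂S₃/q³) ∈ [0, π/3], S₃ = −S₁−S₂. -/
noncomputable def θf (S : ℝ × ℝ) : ℝ :=
  (1 / 3) * Real.arccos ((27 / 2) * (S.1 * S.2 * (-S.1 - S.2)) / (qf S) ^ 3)

/-- The deviatoric yield function G(S₁,S₂) = q(S₁,S₂)/g(θ(S₁,S₂)) (equal to 0 at the
origin, where q = 0). -/
noncomputable def Gf (g : ℝ → ℝ) (S : ℝ × ℝ) : ℝ :=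
  qf S / g (θf S)


/-!
Identify the deviatoric plane with `ℂ` via `z = S₁ + ωS₂ + ω²S₃`, `ω = e^{2πi/3}`. Then `q = ‖z‖`
and `(27/2)·S₁S₂S₃ = Re z³`, so the argument of the arccos in `θ` is `cos (arg z³)` and
`θ = |arg z³| / 3`. Where `θ < π/3` the signed angle `arg z³ / 3` is a smooth coordinate, so
`g ∘ θ` is locally `t ↦ g |t|` composed with it; this is differentiable at `t = 0` exactly when
`g′₊(0) = 0`. Along the circle `z = 3e^{it}` one has `θ = |t|`, which gives the converse. The
endpoint `θ = π/3` reduces to `θ = 0` via `θ(-S) = π/3 - θ(S)`.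
-/

open Real Set Filter Topology

noncomputable def deviatoric (S : ℝ × ℝ) : ℂ :=
  ((3 / 2 * S.1 : ℝ) : ℂ) + ((√3 / 2 * (S.1 + 2 * S.2) : ℝ) : ℂ) * Complex.I

lemma differentiable_deviatoric : Differentiable ℝ deviatoric := by
  unfold deviatoric; fun_prop

lemma norm_deviatoric (S : ℝ × ℝ) : ‖deviatoric S‖ = qf S := by
  have h3 : √3 ^ 2 = 3 := sq_sqrt (by norm_num)
  rw [deviatoric, Complex.norm_add_mul_I, qf]
  congr 1
  linear_combination (S.1 + 2 * S.2) ^ 2 / 4 * h3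

lemma re_deviatoric_pow_three (S : ℝ × ℝ) :
    (deviatoric S ^ 3).re = 27 / 2 * (S.1 * S.2 * (-S.1 - S.2)) := by
  have h3 : √3 ^ 2 = 3 := sq_sqrt (by norm_num)
  simp only [deviatoric, pow_succ, pow_zero, one_mul, Complex.mul_re, Complex.mul_im,
    Complex.add_re, Complex.add_im, Complex.ofReal_re, Complex.ofReal_im, Complex.I_re,
    Complex.I_im]
  linear_combination (-(9 / 8) * S.1 * (S.1 + 2 * S.2) ^ 2) * h3

lemma deviatoric_ne_zero {S : ℝ × ℝ} (hS : S ≠ 0) : deviatoric S ≠ 0 := by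
  contrapose! hS
  have hre : 3 / 2 * S.1 = 0 := by simpa [deviatoric] using congrArg Complex.re hS
  have him : √3 / 2 * (S.1 + 2 * S.2) = 0 := by simpa [deviatoric] using congrArg Complex.im hS
  have h1 : S.1 = 0 := by linarith
  have h2 : S.2 = 0 := by
    rw [h1, zero_add, mul_eq_zero] at him
    linarith [him.resolve_left (by positivity)]
  exact Prod.ext h1 h2

noncomputable def lodeArg (S : ℝ × ℝ) : ℝ := Complex.arg (deviatoric S ^ 3) / 3

lemma θf_eq_abs_lodeArg {S : ℝ × ℝ} (hS : S ≠ 0) : θf S = |lodeArg S| := by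
  have hz : deviatoric S ^ 3 ≠ 0 := pow_ne_zero 3 (deviatoric_ne_zero hS)
  have hcos : (27 / 2) * (S.1 * S.2 * (-S.1 - S.2)) / qf S ^ 3
      = cos |Complex.arg (deviatoric S ^ 3)| := by
    rw [cos_abs, Complex.cos_arg hz, norm_pow, norm_deviatoric, re_deviatoric_pow_three]
  rw [θf, hcos, arccos_cos (abs_nonneg _) (Complex.abs_arg_le_pi _), lodeArg, abs_div,
    abs_of_pos (three_pos : (0 : ℝ) < 3)]
  ring

lemma θf_neg (S : ℝ × ℝ) : θf (-S) = π / 3 - θf S := by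
  have hq : qf (-S) = qf S := by simp only [qf, Prod.fst_neg, Prod.snd_neg]; ring_nf
  have hnum : (27 / 2) * ((-S).1 * (-S).2 * (-(-S).1 - (-S).2)) / qf (-S) ^ 3
      = -((27 / 2) * (S.1 * S.2 * (-S.1 - S.2)) / qf S ^ 3) := by
    rw [hq, Prod.fst_neg, Prod.snd_neg]; ring
  rw [θf, θf, hnum, arccos_neg]
  ring

lemma θf_nonneg (S : ℝ × ℝ) : 0 ≤ θf S := by
  have := arccos_nonneg ((27 / 2) * (S.1 * S.2 * (-S.1 - S.2)) / qf S ^ 3)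
  rw [θf]; positivity

lemma θf_le_pi_div_three (S : ℝ × ℝ) : θf S ≤ π / 3 := by
  have := arccos_le_pi ((27 / 2) * (S.1 * S.2 * (-S.1 - S.2)) / qf S ^ 3)
  rw [θf]; linarith

lemma Complex.differentiableAt_arg {z : ℂ} (hz : z ∈ Complex.slitPlane) :
    DifferentiableAt ℝ Complex.arg z := by
  have := Complex.imCLM.differentiableAt.comp z
    ((Complex.differentiableAt_log hz).restrictScalars ℝ)
  simpa [Function.comp_def, Complex.log_im] using this

lemma differentiableAt_lodeArg {S : ℝ × ℝ} (hS : S ≠ 0) (hθ : θf S < π / 3) :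
    DifferentiableAt ℝ lodeArg S := by
  have hslit : deviatoric S ^ 3 ∈ Complex.slitPlane := by
    refine Complex.mem_slitPlane_iff_arg.2 ⟨fun h => ?_, pow_ne_zero 3 (deviatoric_ne_zero hS)⟩
    rw [θf_eq_abs_lodeArg hS, lodeArg, h, abs_of_pos (by positivity)] at hθ
    exact lt_irrefl _ hθ
  have harg : DifferentiableAt ℝ (Complex.arg ∘ fun S => deviatoric S ^ 3) S :=
    (Complex.differentiableAt_arg hslit).comp S ((differentiable_deviatoric S).fun_pow 3)
  exact (harg.mul_const (3⁻¹ : ℝ)).congr_of_eventuallyEq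
    (.of_forall fun _ => div_eq_mul_inv _ _)

section compAbs

variable {g : ℝ → ℝ} {d : ℝ}

lemma HasDerivWithinAt.comp_abs_Ici (h : HasDerivWithinAt g d (Ici 0) 0) :
    HasDerivWithinAt (fun t => g |t|) d (Ici 0) 0 :=
  h.congr (fun t ht => by rw [abs_of_nonneg ht]) (by rw [abs_zero])

lemma HasDerivWithinAt.comp_abs_Iic (h : HasDerivWithinAt g d (Ici 0) 0) :
    HasDerivWithinAt (fun t => g |t|) (-d) (Iic 0) 0 := by
  have hneg : HasDerivWithinAt (fun t : ℝ => g (-t)) (d * -1) (Iic 0) 0 :=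
    h.comp_of_eq 0 (hasDerivWithinAt_neg 0 _) (fun t (ht : t ≤ 0) => (neg_nonneg.2 ht : 0 ≤ -t))
      neg_zero.symm
  exact (mul_neg_one d ▸ hneg).congr (fun t ht => by rw [abs_of_nonpos ht]) (by simp)

lemma HasDerivWithinAt.hasDerivAt_comp_abs (h : HasDerivWithinAt g 0 (Ici 0) 0) :
    HasDerivAt (fun t => g |t|) 0 0 := by
  have hleft := h.comp_abs_Iic
  rw [neg_zero] at hleft
  rw [← hasDerivWithinAt_univ, ← Iic_union_Ici]
  exact hleft.union h.comp_abs_Ici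

lemma HasDerivWithinAt.eq_zero_of_differentiableAt_comp_abs (h : HasDerivWithinAt g d (Ici 0) 0)
    (hd : DifferentiableAt ℝ (fun t => g |t|) 0) : d = 0 := by
  have hright := (uniqueDiffWithinAt_Ici 0).eq_deriv _ hd.hasDerivAt.hasDerivWithinAt
    h.comp_abs_Ici
  have hleft := (uniqueDiffWithinAt_Iic 0).eq_deriv _ hd.hasDerivAt.hasDerivWithinAt
    h.comp_abs_Iic
  linarith

end compAbs

lemma HasDerivWithinAt.comp_const_sub_Ici {g : ℝ → ℝ} {d a : ℝ}
    (h : HasDerivWithinAt g d (Iic a) a) :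
    HasDerivWithinAt (fun t => g (a - t)) (-d) (Ici 0) 0 := by
  have := h.comp_of_eq 0 ((hasDerivWithinAt_id 0 _).const_sub a)
    (fun t (ht : 0 ≤ t) => (by linarith : a - t ≤ a)) (sub_zero a).symm
  rwa [mul_neg_one] at this

lemma differentiableAt_comp_θf {g : ℝ → ℝ} (hg0 : HasDerivWithinAt g 0 (Ici 0) 0)
    (hgd : ∀ t ∈ Ioo 0 (π / 3), DifferentiableAt ℝ g t) {S : ℝ × ℝ} (hS : S ≠ 0)
    (hθ : θf S < π / 3) : DifferentiableAt ℝ (g ∘ θf) S := by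
  have hlocal : g ∘ θf =ᶠ[𝓝 S] (fun t => g |t|) ∘ lodeArg := by
    filter_upwards [isOpen_ne.mem_nhds hS] with S' hS'
    simp only [Function.comp_apply, θf_eq_abs_lodeArg hS']
  have houter : DifferentiableAt ℝ (fun t => g |t|) (lodeArg S) := by
    rcases eq_or_ne (lodeArg S) 0 with h | h
    · rw [h]; exact hg0.hasDerivAt_comp_abs.differentiableAt
    · rw [θf_eq_abs_lodeArg hS] at hθ
      exact (hgd _ ⟨abs_pos.2 h, hθ⟩).comp _ (differentiableAt_abs h)
  exact (houter.comp S (differentiableAt_lodeArg hS hθ)).congr_of_eventuallyEq hlocal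

lemma comp_θf_neg (g : ℝ → ℝ) : (fun t => g (π / 3 - t)) ∘ θf = (g ∘ θf) ∘ Neg.neg :=
  funext fun S => by simp [θf_neg]

noncomputable def lodeCurve (t : ℝ) : ℝ × ℝ := (2 * cos t, -cos t + √3 * sin t)

lemma deviatoric_lodeCurve (t : ℝ) :
    deviatoric (lodeCurve t) = 3 * (Complex.cos t + Complex.sin t * Complex.I) := by
  have h3 : √3 ^ 2 = 3 := sq_sqrt (by norm_num)
  rw [← Complex.ofReal_cos, ← Complex.ofReal_sin]
  apply Complex.ext <;>
    simp only [deviatoric, lodeCurve, Complex.add_re, Complex.add_im, Complex.mul_re,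
      Complex.mul_im, Complex.ofReal_re, Complex.ofReal_im, Complex.I_re, Complex.I_im,
      Complex.re_ofNat, Complex.im_ofNat]
  · ring
  · linear_combination sin t * h3

lemma lodeCurve_ne_zero (t : ℝ) : lodeCurve t ≠ 0 := by
  intro h
  have hcos : 2 * cos t = 0 := congrArg Prod.fst h
  have hsin : -cos t + √3 * sin t = 0 := congrArg Prod.snd h
  have hc : cos t = 0 := by linarith
  have hs : sin t = 0 := by
    rw [hc, neg_zero, zero_add, mul_eq_zero] at hsin
    exact hsin.resolve_left (by positivity)
  simpa [hc, hs] using sin_sq_add_cos_sq t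

lemma θf_lodeCurve {t : ℝ} (ht : |t| < π / 3) : θf (lodeCurve t) = |t| := by
  have hpow : deviatoric (lodeCurve t) ^ 3 = ((27 : ℝ) : ℂ) *
      (Complex.cos ((3 * t : ℝ) : ℂ) + Complex.sin ((3 * t : ℝ) : ℂ) * Complex.I) := by
    rw [deviatoric_lodeCurve, mul_pow, Complex.cos_add_sin_mul_I_pow]
    push_cast; ring
  have hmem : 3 * t ∈ Ioc (-π) π := by
    constructor <;> linarith [abs_lt.1 ht]
  have harg : lodeArg (lodeCurve t) = t := by
    rw [lodeArg, hpow, Complex.arg_mul_cos_add_sin_mul_I (by norm_num) hmem]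
    ring
  rw [θf_eq_abs_lodeArg (lodeCurve_ne_zero t), harg]

lemma HasDerivWithinAt.eq_zero_of_differentiableAt_comp_θf {g : ℝ → ℝ} {d : ℝ}
    (h : HasDerivWithinAt g d (Ici 0) 0) (hd : DifferentiableAt ℝ (g ∘ θf) (lodeCurve 0)) :
    d = 0 := by
  refine h.eq_zero_of_differentiableAt_comp_abs ?_
  have hcurve : DifferentiableAt ℝ lodeCurve 0 := by unfold lodeCurve; fun_prop
  have hsmall : ∀ᶠ t in 𝓝 (0 : ℝ), |t| < π / 3 :=
    (continuous_abs.tendsto' 0 0 abs_zero).eventually (eventually_lt_nhds (by positivity))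
  refine (hd.comp 0 hcurve).congr_of_eventuallyEq ?_
  filter_upwards [hsmall] with t ht
  simp only [Function.comp_apply, θf_lodeCurve ht]

lemma differentiableAt_Gf_iff {g : ℝ → ℝ} (hg : ∀ S, g (θf S) ≠ 0) {S : ℝ × ℝ} (hS : S ≠ 0) :
    DifferentiableAt ℝ (Gf g) S ↔ DifferentiableAt ℝ (g ∘ θf) S := by
  have hdev : deviatoric S ≠ 0 := deviatoric_ne_zero hS
  have hq : DifferentiableAt ℝ qf S := by
    simpa only [norm_deviatoric] using (differentiable_deviatoric S).norm ℝ hdev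
  have hq0 : qf S ≠ 0 := norm_deviatoric S ▸ norm_ne_zero_iff.2 hdev
  constructor
  · intro hG
    refine (hq.mul (hG.inv (div_ne_zero hq0 (hg S)))).congr_of_eventuallyEq ?_
    filter_upwards [hq.continuousAt.eventually_ne hq0] with S' hS'
    show g (θf S') = qf S' * (qf S' / g (θf S'))⁻¹
    rw [inv_div, mul_div_cancel₀ _ hS']
  · intro hgθ
    exact (hq.mul (hgθ.inv (hg S))).congr_of_eventuallyEq (.of_forall fun _ => div_eq_mul_inv _ _)

theorem smoothness_of_G_iff_general
    (g : ℝ → ℝ)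
    (hgpos : ∀ t ∈ Set.Icc 0 (Real.pi / 3), 0 < g t)
    (hgd : ∀ t ∈ Set.Ioo 0 (Real.pi / 3), DifferentiableAt ℝ g t)
    (gd0 gdpi : ℝ)
    (h0 : HasDerivWithinAt g gd0 (Set.Ici 0) 0)
    (hpi : HasDerivWithinAt g gdpi (Set.Iic (Real.pi / 3)) (Real.pi / 3)) :
    (∀ S : ℝ × ℝ, S ≠ (0, 0) → DifferentiableAt ℝ (Gf g) S) ↔
      (gd0 = 0 ∧ gdpi = 0) := by
  have hg : ∀ S, g (θf S) ≠ 0 := fun S => (hgpos _ ⟨θf_nonneg S, θf_le_pi_div_three S⟩).ne'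
  have h0' := hpi.comp_const_sub_Ici
  have hgd' : ∀ t ∈ Ioo 0 (π / 3), DifferentiableAt ℝ (fun t => g (π / 3 - t)) t := fun t ht =>
    (hgd _ ⟨by linarith [ht.2], by linarith [ht.1]⟩).comp t (differentiableAt_id.const_sub _)
  have hne : lodeCurve 0 ≠ 0 := lodeCurve_ne_zero 0
  refine ⟨fun hG => ⟨?_, ?_⟩, ?_⟩
  · exact h0.eq_zero_of_differentiableAt_comp_θf ((differentiableAt_Gf_iff hg hne).1 (hG _ hne))
  · refine neg_eq_zero.1 (h0'.eq_zero_of_differentiableAt_comp_θf ?_)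
    have hne' : -lodeCurve 0 ≠ 0 := neg_ne_zero.2 hne
    rw [comp_θf_neg]
    exact ((differentiableAt_Gf_iff hg hne').1 (hG _ hne')).comp _ (by fun_prop)
  · rintro ⟨rfl, rfl⟩ S hS
    rw [neg_zero] at h0'
    rw [differentiableAt_Gf_iff hg hS]
    rcases (θf_le_pi_div_three S).lt_or_eq with hlt | heq
    · exact differentiableAt_comp_θf h0 hgd hS hlt
    · have hθ : θf (-S) < π / 3 := by rw [θf_neg, heq, sub_self]; positivity
      have := differentiableAt_comp_θf h0' hgd' (neg_ne_zero.2 hS) hθ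
      rw [comp_θf_neg] at this
      simpa [Function.comp_def] using this.comp S (by fun_prop)

/-- For g continuous, strictly positive on [0,π/3], continuously
differentiable on (0,π/3), with one-sided derivatives g′₊(0), g′₋(π/3) at the endpoints,
G = q/g(θ) is differentiable at every point of ℝ² ∖ {(0,0)} iff g′₊(0) = 0 and
g′₋(π/3) = 0. -/
theorem smoothness_of_G_iff
    (g : ℝ → ℝ)
    (hgc : ContinuousOn g (Set.Icc 0 (Real.pi / 3)))
    (hgpos : ∀ t ∈ Set.Icc 0 (Real.pi / 3), 0 < g t)
    (hgd : ∀ t ∈ Set.Ioo 0 (Real.pi / 3), DifferentiableAt ℝ g t)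
    (hgd' : ContinuousOn (deriv g) (Set.Ioo 0 (Real.pi / 3)))
    (gd0 gdpi : ℝ)
    (h0 : HasDerivWithinAt g gd0 (Set.Ici 0) 0)
    (hpi : HasDerivWithinAt g gdpi (Set.Iic (Real.pi / 3)) (Real.pi / 3)) :
    (∀ S : ℝ × ℝ, S ≠ (0, 0) → DifferentiableAt ℝ (Gf g) S) ↔
      (gd0 = 0 ∧ gdpi = 0) :=
  smoothness_of_G_iff_general g hgpos hgd gd0 gdpi h0 hpi
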